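/- arXiv:1211.0834 — 4 statements merged into one kernel-verified Lean document; each statement's English description precedes it below -/
import Mathlib

section
/- For α = 2, the partial sum ∑_{m=2}^{n} 1/(m log₂ m) equals δ₁ + (ln 2)² · log₂ log₂ n for some δ₁ ∈ [0, 1/2] (depending on n). -/
/-- Base-2 logarithm. -/
noncomputable def log2 (x : ℝ) : ℝ := Real.log x / Real.log 2

/-!
Since `ln ln` has derivative `1 / (x ln x)`, the sum `S n = ∑_{m=2}^{n} 1/(m ln m)` telescopes
against increments of `ln ln`: each term lies between `ln ln (m+1) - ln ln m` and
`ln ln m - ln ln (m-1)`, which follows from `1 - 1/t ≤ ln t ≤ t - 1` applied twice. Hence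
`ln ln n - ln ln 2 ≤ S n ≤ 1/(2 ln 2) + ln ln n - ln ln 2`. Multiplying by `ln 2` turns `S n`
into the sum with `log₂` and `ln ln n - ln ln 2` into `(ln 2)² log₂ log₂ n`, and the first
term `1/(2 ln 2)` into `1/2`.
-/

open Finset Real

namespace Real

lemma log_sub_log_le_div {a b : ℝ} (ha : 0 < a) (hb : 0 < b) :
    log b - log a ≤ (b - a) / a := by
  have h := log_le_sub_one_of_pos (div_pos hb ha)
  rwa [log_div hb.ne' ha.ne', div_sub_one ha.ne'] at h

lemma div_le_log_sub_log {a b : ℝ} (ha : 0 < a) (hb : 0 < b) :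
    (b - a) / b ≤ log b - log a := by
  have h := log_sub_log_le_div hb ha
  rw [← neg_sub b a, neg_div] at h
  linarith

lemma log_log_add_one_sub_le {x : ℝ} (hx : 1 < x) :
    log (log (x + 1)) - log (log x) ≤ 1 / (x * log x) := by
  have hx0 : 0 < x := by linarith
  have hlog : 0 < log x := log_pos hx
  calc log (log (x + 1)) - log (log x)
      ≤ (log (x + 1) - log x) / log x :=
        log_sub_log_le_div hlog (hlog.trans (log_lt_log hx0 (by linarith)))
    _ ≤ (x + 1 - x) / x / log x := by gcongr; exact log_sub_log_le_div hx0 (by linarith)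
    _ = 1 / (x * log x) := by rw [add_sub_cancel_left, div_div]

lemma one_div_le_log_log_add_one_sub {x : ℝ} (hx : 1 < x) :
    1 / ((x + 1) * log (x + 1)) ≤ log (log (x + 1)) - log (log x) := by
  have hx0 : 0 < x := by linarith
  have hlog : 0 < log x := log_pos hx
  have hlog' : 0 < log (x + 1) := hlog.trans (log_lt_log hx0 (by linarith))
  calc 1 / ((x + 1) * log (x + 1))
      = (x + 1 - x) / (x + 1) / log (x + 1) := by rw [add_sub_cancel_left, div_div]
    _ ≤ (log (x + 1) - log x) / log (x + 1) := by
        gcongr; exact div_le_log_sub_log hx0 (by linarith)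
    _ ≤ log (log (x + 1)) - log (log x) := div_le_log_sub_log hlog hlog'

end Real

lemma log_log_sub_log_log_two_le_sum {n : ℕ} (hn : 2 ≤ n) :
    log (log (n + 1)) - log (log 2) ≤ ∑ m ∈ Icc 2 n, 1 / ((m : ℝ) * log m) := by
  have hterm : ∀ m ∈ Icc 2 n,
      log (log ((m + 1 : ℕ) : ℝ)) - log (log (m : ℝ)) ≤ 1 / ((m : ℝ) * log m) := by
    intro m hm
    have hm : (1 : ℝ) < m := by exact_mod_cast (mem_Icc.1 hm).1
    push_cast
    exact log_log_add_one_sub_le hm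
  simpa using (sum_Icc_sub hn fun m : ℕ ↦ log (log (m : ℝ))).symm.trans_le (sum_le_sum hterm)

lemma sum_le_log_log_sub_log_log_two {n : ℕ} (hn : 2 ≤ n) :
    ∑ m ∈ Icc 2 n, 1 / ((m : ℝ) * log m) ≤
      1 / (2 * log 2) + (log (log n) - log (log 2)) := by
  induction n, hn using Nat.le_induction with
  | base => norm_num
  | succ n hn ih =>
    have hn : (1 : ℝ) < n := by exact_mod_cast hn
    rw [sum_Icc_succ_top (by omega)]
    push_cast
    linarith [one_div_le_log_log_add_one_sub hn]

lemma one_div_mul_log2 (x : ℝ) : 1 / (x * log2 x) = log 2 * (1 / (x * log x)) := by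
  simp only [log2, one_div, mul_inv, inv_div]
  ring

lemma log2_log2 {x : ℝ} (hx : 1 < x) : log2 (log2 x) = (log (log x) - log (log 2)) / log 2 := by
  rw [log2, log2, log_div (log_pos hx).ne' (log_pos one_lt_two).ne']

/-- For `α = 2` and every `n ≥ 2`, there is `δ₁ ∈ [0, 1/2]` (depending on `n`) with
`∑_{m=2}^{n} 1/(m log₂ m) = δ₁ + (ln 2)² log₂ log₂ n`. -/
theorem partial_sum_asymp_alpha_two (n : ℕ) (hn : 2 ≤ n) :
    ∃ δ₁ : ℝ, 0 ≤ δ₁ ∧ δ₁ ≤ 1 / 2 ∧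
      ∑ m ∈ Finset.Icc 2 n, 1 / ((m : ℝ) * log2 m) =
        δ₁ + Real.log 2 ^ 2 * log2 (log2 n) := by
  set S := ∑ m ∈ Icc 2 n, 1 / ((m : ℝ) * log m)
  set D := log (log n) - log (log 2)
  have hn1 : (1 : ℝ) < n := by exact_mod_cast hn
  have hlog2 : 0 < log 2 := log_pos one_lt_two
  have hD : D ≤ S := by
    refine le_trans (sub_le_sub_right ?_ _) (log_log_sub_log_log_two_le_sum hn)
    exact log_le_log (log_pos hn1) (log_le_log (by positivity) (by linarith))
  refine ⟨log 2 * (S - D), mul_nonneg hlog2.le (sub_nonneg.2 hD), ?_, ?_⟩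
  · calc log 2 * (S - D) ≤ log 2 * (1 / (2 * log 2)) := by
          gcongr; linarith [sum_le_log_log_sub_log_log_two hn]
      _ = 1 / 2 := by field_simp
  · simp only [one_div_mul_log2, ← mul_sum, log2_log2 hn1]
    field_simp
    ring
end

section
/- If X and Y are discrete random variables and B an event, then I(X;Y) ≤ P(B)·I(X;Y|B) + P(Bᶜ)·I(X;Y|Bᶜ) + 1. -/
/-!
Write `I(X;Y) = H(X) - H(X|Y)` and regard `μ` as the mixture `P(B)·μ[|B] + P(Bᶜ)·μ[|Bᶜ]`.
Entropy is concave only up to the entropy of the mixing weights: as `η(x) = -x log x` is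
subadditive, `H(X) ≤ P(B)·H_B(X) + P(Bᶜ)·H_Bᶜ(X) + h(P(B))`, and the binary entropy `h` is at
most one bit. The conditional entropy `H(X|Y) = ∑ₜ P(Y = t)·H(X | Y = t)` is genuinely concave in
the joint law, since `(a, b) ↦ b·η(a/b)` is the perspective of the concave function `η`.
Adding the two bounds gives the theorem.
-/

open MeasureTheory ProbabilityTheory

/-- Probability of an event, as a real number. -/
noncomputable def pr {Ω : Type*} [MeasurableSpace Ω] (μ : Measure Ω) (A : Set Ω) : ℝ :=
  (μ A).toReal

/-- Shannon entropy (in bits) of a discrete random variable. -/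
noncomputable def Hent {Ω S : Type*} [MeasurableSpace Ω] (μ : Measure Ω) (X : Ω → S) : ℝ :=
  ∑' s : S, -(pr μ (X ⁻¹' {s}) * log2 (pr μ (X ⁻¹' {s})))

/-- Shannon mutual information `I(X;Y) = H(X) + H(Y) − H(X,Y)`. -/
noncomputable def MI {Ω S T : Type*} [MeasurableSpace Ω] (μ : Measure Ω)
    (X : Ω → S) (Y : Ω → T) : ℝ :=
  Hent μ X + Hent μ Y - Hent μ (fun ω => (X ω, Y ω))

open Real Finset

namespace Real

lemma negMulLog_add_le {x y : ℝ} (hx : 0 ≤ x) (hy : 0 ≤ y) :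
    negMulLog (x + y) ≤ negMulLog x + negMulLog y := by
  have mul_log_le {u : ℝ} (hu : 0 ≤ u) (hux : u ≤ x + y) : u * log u ≤ u * log (x + y) := by
    rcases hu.eq_or_lt with rfl | hu
    · simp
    · exact mul_le_mul_of_nonneg_left (log_le_log hu hux) hu.le
  simp only [negMulLog_eq_neg, add_mul]
  linarith [mul_log_le hx (le_add_of_nonneg_right hy), mul_log_le hy (le_add_of_nonneg_left hx)]

lemma negMulLog_mix_le {p q x y : ℝ} (hp : 0 ≤ p) (hq : 0 ≤ q) (hx : 0 ≤ x) (hy : 0 ≤ y) :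
    negMulLog (p * x + q * y) ≤
      p * negMulLog x + q * negMulLog y + (x * negMulLog p + y * negMulLog q) := by
  refine (negMulLog_add_le (mul_nonneg hp hx) (mul_nonneg hq hy)).trans_eq ?_
  rw [negMulLog_mul, negMulLog_mul]
  ring

lemma mul_negMulLog_div {a b : ℝ} (ha : 0 ≤ a) (hab : a ≤ b) :
    b * negMulLog (a / b) = negMulLog a + a * log b := by
  rcases (ha.trans hab).eq_or_lt with rfl | hb
  · simp [le_antisymm hab ha]
  · rw [div_eq_mul_inv, negMulLog_mul]
    simp only [negMulLog, log_inv]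
    field_simp

lemma mul_negMulLog_div_add_le {a₁ a₂ b₁ b₂ : ℝ} (ha₁ : 0 ≤ a₁) (hab₁ : a₁ ≤ b₁)
    (ha₂ : 0 ≤ a₂) (hab₂ : a₂ ≤ b₂) :
    b₁ * negMulLog (a₁ / b₁) + b₂ * negMulLog (a₂ / b₂) ≤
      (b₁ + b₂) * negMulLog ((a₁ + a₂) / (b₁ + b₂)) := by
  rcases (ha₁.trans hab₁).eq_or_lt with rfl | hb₁
  · simp [le_antisymm hab₁ ha₁]
  rcases (ha₂.trans hab₂).eq_or_lt with rfl | hb₂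
  · simp [le_antisymm hab₂ ha₂]
  have hb : 0 < b₁ + b₂ := add_pos hb₁ hb₂
  have hw : b₁ / (b₁ + b₂) + b₂ / (b₁ + b₂) = 1 := by field_simp
  have key := concaveOn_negMulLog.2 (Set.mem_Ici.2 (div_nonneg ha₁ hb₁.le))
    (Set.mem_Ici.2 (div_nonneg ha₂ hb₂.le)) (div_nonneg hb₁.le hb.le) (div_nonneg hb₂.le hb.le) hw
  have harg :
      b₁ / (b₁ + b₂) * (a₁ / b₁) + b₂ / (b₁ + b₂) * (a₂ / b₂) = (a₁ + a₂) / (b₁ + b₂) := by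
    field_simp
  simp only [smul_eq_mul, harg] at key
  calc b₁ * negMulLog (a₁ / b₁) + b₂ * negMulLog (a₂ / b₂)
      = (b₁ + b₂) *
          (b₁ / (b₁ + b₂) * negMulLog (a₁ / b₁) + b₂ / (b₁ + b₂) * negMulLog (a₂ / b₂)) := by
        field_simp
    _ ≤ (b₁ + b₂) * negMulLog ((a₁ + a₂) / (b₁ + b₂)) := by gcongr

lemma mul_negMulLog_mul_div_mul_left (r a b : ℝ) :
    (r * b) * negMulLog (r * a / (r * b)) = r * (b * negMulLog (a / b)) := by
  rcases eq_or_ne r 0 with rfl | hr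
  · simp
  · rw [mul_div_mul_left _ _ hr, mul_assoc]

end Real

section FiniteSums

variable {ι κ : Type*} [Fintype ι] [Fintype κ]

lemma sum_negMulLog_mix_le {p q : ℝ} {x y : ι → ℝ} (hp : 0 ≤ p) (hq : 0 ≤ q) (hpq : p + q = 1)
    (hx : ∀ i, 0 ≤ x i) (hy : ∀ i, 0 ≤ y i) (hx₁ : ∑ i, x i ≤ 1) (hy₁ : ∑ i, y i ≤ 1) :
    ∑ i, negMulLog (p * x i + q * y i) ≤
      p * ∑ i, negMulLog (x i) + q * ∑ i, negMulLog (y i) + binEntropy p := by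
  have hq' : q = 1 - p := by linarith
  have hp₀ : 0 ≤ negMulLog p := negMulLog_nonneg hp (by linarith)
  have hq₀ : 0 ≤ negMulLog q := negMulLog_nonneg hq (by linarith)
  calc ∑ i, negMulLog (p * x i + q * y i)
      ≤ ∑ i, (p * negMulLog (x i) + q * negMulLog (y i) +
          (x i * negMulLog p + y i * negMulLog q)) :=
        sum_le_sum fun i _ ↦ negMulLog_mix_le hp hq (hx i) (hy i)
    _ = p * ∑ i, negMulLog (x i) + q * ∑ i, negMulLog (y i) +
          ((∑ i, x i) * negMulLog p + (∑ i, y i) * negMulLog q) := by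
        simp only [sum_add_distrib, mul_sum, sum_mul]
    _ ≤ p * ∑ i, negMulLog (x i) + q * ∑ i, negMulLog (y i) +
          (1 * negMulLog p + 1 * negMulLog q) := by
        gcongr
    _ = p * ∑ i, negMulLog (x i) + q * ∑ i, negMulLog (y i) + binEntropy p := by
        rw [binEntropy_eq_negMulLog_add_negMulLog_one_sub, hq', one_mul, one_mul]

noncomputable def condEntropy (a : ι → κ → ℝ) : ℝ :=
  ∑ i, ∑ j, negMulLog (a i j) - ∑ j, negMulLog (∑ i, a i j)

lemma condEntropy_eq_sum_mul_negMulLog_div {a : ι → κ → ℝ} (ha : ∀ i j, 0 ≤ a i j) :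
    condEntropy a = ∑ j, ∑ i, (∑ i', a i' j) * negMulLog (a i j / ∑ i', a i' j) := by
  have hle : ∀ i j, a i j ≤ ∑ i', a i' j := fun i j ↦
    single_le_sum (fun i' _ ↦ ha i' j) (mem_univ i)
  have hfiber (j : κ) : ∑ i, (∑ i', a i' j) * negMulLog (a i j / ∑ i', a i' j) =
      ∑ i, negMulLog (a i j) - negMulLog (∑ i, a i j) := by
    rw [sum_congr rfl fun i _ ↦ mul_negMulLog_div (ha i j) (hle i j), sum_add_distrib, ← sum_mul,
      negMulLog]
    ring
  rw [sum_congr rfl fun j _ ↦ hfiber j, sum_sub_distrib, condEntropy, sum_comm]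

lemma le_condEntropy_mix {p q : ℝ} {a₁ a₂ : ι → κ → ℝ} (hp : 0 ≤ p) (hq : 0 ≤ q)
    (ha₁ : ∀ i j, 0 ≤ a₁ i j) (ha₂ : ∀ i j, 0 ≤ a₂ i j) :
    p * condEntropy a₁ + q * condEntropy a₂ ≤
      condEntropy (fun i j ↦ p * a₁ i j + q * a₂ i j) := by
  have hmix (i j) : 0 ≤ p * a₁ i j + q * a₂ i j :=
    add_nonneg (mul_nonneg hp (ha₁ i j)) (mul_nonneg hq (ha₂ i j))
  rw [condEntropy_eq_sum_mul_negMulLog_div ha₁, condEntropy_eq_sum_mul_negMulLog_div ha₂,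
    condEntropy_eq_sum_mul_negMulLog_div hmix, mul_sum, mul_sum, ← sum_add_distrib]
  refine sum_le_sum fun j _ ↦ ?_
  rw [mul_sum, mul_sum, ← sum_add_distrib]
  refine sum_le_sum fun i _ ↦ ?_
  rw [← mul_negMulLog_mul_div_mul_left p, ← mul_negMulLog_mul_div_mul_left q, sum_add_distrib,
    ← mul_sum, ← mul_sum]
  exact mul_negMulLog_div_add_le (mul_nonneg hp (ha₁ i j))
    (by gcongr; exact single_le_sum (fun i' _ ↦ ha₁ i' j) (mem_univ i))
    (mul_nonneg hq (ha₂ i j)) (by gcongr; exact single_le_sum (fun i' _ ↦ ha₂ i' j) (mem_univ i))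

end FiniteSums

section Measure

variable {Ω S T : Type*} [MeasurableSpace Ω]

lemma pr_eq_measureReal (μ : Measure Ω) (A : Set Ω) : pr μ A = μ.real A := rfl

lemma Hent_eq_sum_negMulLog [Fintype S] (μ : Measure Ω) (X : Ω → S) :
    Hent μ X = (∑ s, negMulLog (μ.real (X ⁻¹' {s}))) / log 2 := by
  rw [Hent, tsum_fintype, sum_div]
  refine sum_congr rfl fun s _ ↦ ?_
  simp only [pr_eq_measureReal, log2, negMulLog]
  ring

variable [MeasurableSpace S] [MeasurableSingletonClass S] [Fintype S]
  [MeasurableSpace T] [MeasurableSingletonClass T]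

lemma sum_measureReal_preimage_singleton_le_one (ν : Measure Ω) [IsZeroOrProbabilityMeasure ν]
    {X : Ω → S} (hX : Measurable X) : ∑ s, ν.real (X ⁻¹' {s}) ≤ 1 := by
  rw [sum_measureReal_preimage_singleton _ fun s _ ↦ hX (measurableSet_singleton s)]
  exact measureReal_le_one

lemma measureReal_preimage_eq_sum_pair (ν : Measure Ω) [IsFiniteMeasure ν] {X : Ω → S}
    {Y : Ω → T} (hX : Measurable X) (hY : Measurable Y) (t : T) :
    ν.real (Y ⁻¹' {t}) = ∑ s, ν.real ((fun ω ↦ (X ω, Y ω)) ⁻¹' {(s, t)}) := by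
  have := sum_measureReal_preimage_singleton (μ := ν) (univ ×ˢ {t})
    (fun st _ ↦ (hX.prodMk hY) (measurableSet_singleton st))
  simp only [sum_product, sum_singleton] at this
  rw [this]
  congr 1
  ext ω
  simp [eq_comm]

variable [Fintype T]

lemma Hent_sub_Hent_pair (ν : Measure Ω) [IsFiniteMeasure ν] {X : Ω → S} {Y : Ω → T}
    (hX : Measurable X) (hY : Measurable Y) :
    Hent ν Y - Hent ν (fun ω ↦ (X ω, Y ω)) =
      -condEntropy (fun s t ↦ ν.real ((fun ω ↦ (X ω, Y ω)) ⁻¹' {(s, t)})) / log 2 := by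
  simp only [Hent_eq_sum_negMulLog, condEntropy, Fintype.sum_prod_type,
    ← measureReal_preimage_eq_sum_pair ν hX hY]
  ring

lemma Hent_le_of_mix {μ ν₁ ν₂ : Measure Ω} [IsZeroOrProbabilityMeasure ν₁]
    [IsZeroOrProbabilityMeasure ν₂] {p q : ℝ} (hp : 0 ≤ p) (hq : 0 ≤ q) (hpq : p + q = 1)
    (hμ : ∀ A, μ.real A = p * ν₁.real A + q * ν₂.real A) {X : Ω → S} (hX : Measurable X) :
    Hent μ X ≤ p * Hent ν₁ X + q * Hent ν₂ X + 1 := by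
  simp only [Hent_eq_sum_negMulLog, hμ]
  have hmix := sum_negMulLog_mix_le hp hq hpq (fun s ↦ measureReal_nonneg)
    (fun s ↦ measureReal_nonneg) (sum_measureReal_preimage_singleton_le_one ν₁ hX)
    (sum_measureReal_preimage_singleton_le_one ν₂ hX)
  have hbin := binEntropy_le_log_two (p := p)
  rw [div_le_iff₀ (log_pos one_lt_two)]
  refine hmix.trans ?_
  field_simp
  linarith

lemma Hent_sub_Hent_pair_le_of_mix {μ ν₁ ν₂ : Measure Ω} [IsFiniteMeasure μ] [IsFiniteMeasure ν₁]
    [IsFiniteMeasure ν₂] {p q : ℝ} (hp : 0 ≤ p) (hq : 0 ≤ q)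
    (hμ : ∀ A, μ.real A = p * ν₁.real A + q * ν₂.real A) {X : Ω → S} {Y : Ω → T}
    (hX : Measurable X) (hY : Measurable Y) :
    Hent μ Y - Hent μ (fun ω ↦ (X ω, Y ω)) ≤
      p * (Hent ν₁ Y - Hent ν₁ (fun ω ↦ (X ω, Y ω))) +
        q * (Hent ν₂ Y - Hent ν₂ (fun ω ↦ (X ω, Y ω))) := by
  rw [Hent_sub_Hent_pair μ hX hY, Hent_sub_Hent_pair ν₁ hX hY, Hent_sub_Hent_pair ν₂ hX hY]
  simp only [hμ]
  have hconcave := le_condEntropy_mix hp hq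
    (a₁ := fun s t ↦ ν₁.real ((fun ω ↦ (X ω, Y ω)) ⁻¹' {(s, t)}))
    (a₂ := fun s t ↦ ν₂.real ((fun ω ↦ (X ω, Y ω)) ⁻¹' {(s, t)}))
    (fun _ _ ↦ measureReal_nonneg) (fun _ _ ↦ measureReal_nonneg)
  field_simp
  linarith

lemma measureReal_eq_cond_mix (μ : Measure Ω) [IsFiniteMeasure μ] {B : Set Ω}
    (hB : MeasurableSet B) (A : Set Ω) :
    μ.real A = μ.real B * (μ[|B]).real A + μ.real Bᶜ * (μ[|Bᶜ]).real A := by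
  have h := congrArg ENNReal.toReal (cond_add_cond_compl_eq (t := A) hB μ)
  rw [ENNReal.toReal_add (by finiteness) (by finiteness), ENNReal.toReal_mul,
    ENNReal.toReal_mul] at h
  simp only [measureReal_def, ← h]
  ring

end Measure

/-- `I(X;Y) ≤ P(B)·I(X;Y|B) + P(Bᶜ)·I(X;Y|Bᶜ) + 1`. -/
theorem mutualInfo_event_bound
    {Ω S T : Type*} [MeasurableSpace Ω] (μ : Measure Ω) [IsProbabilityMeasure μ]
    [MeasurableSpace S] [MeasurableSingletonClass S] [Finite S]
    [MeasurableSpace T] [MeasurableSingletonClass T] [Finite T]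
    (X : Ω → S) (Y : Ω → T) (hX : Measurable X) (hY : Measurable Y)
    (B : Set Ω) (hB : MeasurableSet B) :
    MI μ X Y ≤ pr μ B * MI (μ[|B]) X Y + pr μ Bᶜ * MI (μ[|Bᶜ]) X Y + 1 := by
  have := Fintype.ofFinite S
  have := Fintype.ofFinite T
  have hpq : μ.real B + μ.real Bᶜ = 1 := by
    rw [measureReal_add_measureReal_compl hB, probReal_univ]
  have hmix := measureReal_eq_cond_mix μ hB
  have hHX := Hent_le_of_mix measureReal_nonneg measureReal_nonneg hpq hmix hX
  have hHXY := Hent_sub_Hent_pair_le_of_mix measureReal_nonneg measureReal_nonneg hmix hX hY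
  rw [MI, MI, MI, pr_eq_measureReal, pr_eq_measureReal]
  linarith
end

section
/- Consequently, if the observable process X_i = f(Y_i) of a stationary countable-state Markov chain has unbounded block mutual information E(n) = I(X_{-n+1}^0; X_1^n) → ∞, then H(Y_0) = ∞; in particular Y_0 must take infinitely many values with positive probability. -/
open MeasureTheory ProbabilityTheory

/-- `(Y_i)_{i∈ℤ}` is a stationary Markov process with transition matrix `Q`: the finite
dimensional distributions over blocks of consecutive indices are given by the time-0
marginal followed by products of transition probabilities. -/
def IsMarkovWith {Ω S : Type*} [MeasurableSpace Ω] (μ : Measure Ω)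
    (Y : ℤ → Ω → S) (Q : S → S → ℝ) : Prop :=
  ∀ a b : ℤ, a ≤ b → ∀ y : ℤ → S,
    pr μ (⋂ j ∈ Set.Icc a b, (Y j) ⁻¹' {y j}) =
      pr μ ((Y 0) ⁻¹' {y a}) * ∏ j ∈ Finset.Ico a b, Q (y j) (y (j + 1))

/-- The past block `X_{-n+1}^0` of a process. -/
def pastBlock {Ω S : Type*} (X : ℤ → Ω → S) (n : ℕ) (ω : Ω) : Fin n → S :=
  fun i => X (-(n : ℤ) + 1 + (i : ℤ)) ω

/-- The future block `X_1^n` of a process. -/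
def futureBlock {Ω S : Type*} (X : ℤ → Ω → S) (n : ℕ) (ω : Ω) : Fin n → S :=
  fun i => X (1 + (i : ℤ)) ω

/-- Shannon entropy with values in `ℝ≥0∞` (so that infinite entropy is expressible). -/
noncomputable def HentE {Ω S : Type*} [MeasurableSpace Ω] (μ : Measure Ω) (X : Ω → S) :
    ENNReal :=
  ∑' s : S, ENNReal.ofReal (-(pr μ (X ⁻¹' {s}) * log2 (pr μ (X ⁻¹' {s}))))

/-!
Given the present state `Y 0`, the past block `X_{-n+1}^0` and the future block `X_1^n` are
independent: both are functions of the chain on one side of time `0`, and the Markov product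
formula for the cylinder sets factorises at time `0`. For such a chain past – `Y 0` – future one
has `I(past; future) ≤ I(past; (future, Y 0)) = I(past; Y 0) ≤ H(Y 0)`, so `E(n) ≤ H(Y 0)` for
every `n`. Unbounded `E(n)` therefore forces `H(Y 0) = ∞`, which no finitely supported
distribution has.
-/

section Cylinders

variable {Ω S : Type*}

def cylinderSet (Y : ℤ → Ω → S) (a b : ℤ) (y : ℤ → S) : Set Ω :=
  ⋂ j ∈ Set.Icc a b, Y j ⁻¹' {y j}

def window (Y : ℤ → Ω → S) (a b : ℤ) (ω : Ω) : Set.Icc a b → S :=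
  fun j => Y j ω

lemma cylinderSet_inter_cylinderSet (Y : ℤ → Ω → S) {a m b : ℤ} (ham : a ≤ m) (hmb : m ≤ b)
    (y : ℤ → S) : cylinderSet Y a m y ∩ cylinderSet Y m b y = cylinderSet Y a b y := by
  rw [cylinderSet, cylinderSet, cylinderSet, ← Set.biInter_union,
    Set.Icc_union_Icc_eq_Icc ham hmb]

lemma cylinderSet_self (Y : ℤ → Ω → S) (m : ℤ) (y : ℤ → S) :
    cylinderSet Y m m y = Y m ⁻¹' {y m} := by
  simp [cylinderSet]

lemma preimage_window_singleton (Y : ℤ → Ω → S) (a b : ℤ) (w : Set.Icc a b → S) :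
    window Y a b ⁻¹' {w} = ⋂ j : Set.Icc a b, Y j ⁻¹' {w j} := by
  ext ω
  simp [window, funext_iff]

lemma cylinderSet_eq_preimage_window {Y : ℤ → Ω → S} {a b : ℤ} {w : Set.Icc a b → S}
    {y : ℤ → S} (hy : ∀ j : Set.Icc a b, y j = w j) :
    cylinderSet Y a b y = window Y a b ⁻¹' {w} := by
  rw [preimage_window_singleton, cylinderSet, Set.biInter_eq_iInter]
  simp only [hy]

variable [MeasurableSpace Ω] [MeasurableSpace S] [MeasurableSingletonClass S]

lemma measurableSet_preimage_window_singleton {Y : ℤ → Ω → S} (hY : ∀ i, Measurable (Y i))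
    (a b : ℤ) (w : Set.Icc a b → S) : MeasurableSet (window Y a b ⁻¹' {w}) := by
  rw [preimage_window_singleton]
  exact .iInter fun j => hY j (measurableSet_singleton _)

lemma measurableSet_preimage_window [Countable S] {Y : ℤ → Ω → S} (hY : ∀ i, Measurable (Y i))
    (a b : ℤ) (A : Set (Set.Icc a b → S)) : MeasurableSet (window Y a b ⁻¹' A) := by
  rw [← Set.biUnion_preimage_singleton]
  exact .biUnion A.to_countable fun w _ => measurableSet_preimage_window_singleton hY a b w

end Cylinders

section Factorization

open scoped ENNReal

variable {Ω α β : Type*} [MeasurableSpace Ω] [Countable α] [Countable β] {μ : Measure Ω}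

lemma measure_preimage_inter_eq_tsum {P : Ω → α} (hP : ∀ p, MeasurableSet (P ⁻¹' {p}))
    (A : Set α) (s : Set Ω) : μ (P ⁻¹' A ∩ s) = ∑' p : A, μ (P ⁻¹' {(p : α)} ∩ s) := by
  have hPA : MeasurableSet (P ⁻¹' A) :=
    Set.biUnion_preimage_singleton P A ▸ .biUnion A.to_countable fun p _ => hP p
  simp only [← Measure.restrict_apply hPA, ← Measure.restrict_apply (hP _)]
  exact (tsum_measure_preimage_singleton A.to_countable fun p _ => hP p).symm

lemma measure_preimage_inter_preimage_mul_eq {P : Ω → α} {F : Ω → β}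
    (hP : ∀ p, MeasurableSet (P ⁻¹' {p})) (hF : ∀ q, MeasurableSet (F ⁻¹' {q}))
    {A : Set α} {B : Set β} {t : ℝ≥0∞}
    (h : ∀ p ∈ A, ∀ q ∈ B, μ (P ⁻¹' {p} ∩ F ⁻¹' {q}) * t = μ (P ⁻¹' {p}) * μ (F ⁻¹' {q})) :
    μ (P ⁻¹' A ∩ F ⁻¹' B) * t = μ (P ⁻¹' A) * μ (F ⁻¹' B) := by
  have hsplit : ∀ p : α, μ (P ⁻¹' {p} ∩ F ⁻¹' B) = ∑' q : B, μ (P ⁻¹' {p} ∩ F ⁻¹' {(q : β)}) := by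
    intro p
    simp only [Set.inter_comm (P ⁻¹' {p})]
    exact measure_preimage_inter_eq_tsum hF B _
  rw [measure_preimage_inter_eq_tsum hP A, ← tsum_measure_preimage_singleton A.to_countable
    fun p _ => hP p, ← tsum_measure_preimage_singleton B.to_countable fun q _ => hF q,
    ← ENNReal.tsum_mul_right, ← ENNReal.tsum_mul_right]
  refine tsum_congr fun p => ?_
  rw [hsplit, ← ENNReal.tsum_mul_right, ← ENNReal.tsum_mul_left]
  exact tsum_congr fun q => h p p.2 q q.2

end Factorization

lemma pr_mul_pr_eq_iff {Ω : Type*} [MeasurableSpace Ω] {μ : Measure Ω} [IsFiniteMeasure μ]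
    {s t u v : Set Ω} : pr μ s * pr μ t = pr μ u * pr μ v ↔ μ s * μ t = μ u * μ v := by
  simp only [pr, ← ENNReal.toReal_mul]
  exact ENNReal.toReal_eq_toReal_iff' (by finiteness) (by finiteness)

namespace IsMarkovWith

variable {Ω S : Type*} [MeasurableSpace Ω] {μ : Measure Ω} {Y : ℤ → Ω → S} {Q : S → S → ℝ}

lemma pr_preimage (hM : IsMarkovWith μ Y Q) (m : ℤ) (s : S) :
    pr μ (Y m ⁻¹' {s}) = pr μ (Y 0 ⁻¹' {s}) := by
  simpa [cylinderSet_self] using hM m m le_rfl (fun _ => s)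

lemma pr_cylinder_mul (hM : IsMarkovWith μ Y Q) {a m b : ℤ} (ham : a ≤ m) (hmb : m ≤ b)
    (y : ℤ → S) :
    pr μ (cylinderSet Y a b y) * pr μ (Y m ⁻¹' {y m}) =
      pr μ (cylinderSet Y a m y) * pr μ (cylinderSet Y m b y) := by
  have hsplit : ∏ j ∈ Finset.Ico a b, Q (y j) (y (j + 1)) =
      (∏ j ∈ Finset.Ico a m, Q (y j) (y (j + 1))) * ∏ j ∈ Finset.Ico m b, Q (y j) (y (j + 1)) := by
    rw [← Finset.prod_union (Finset.Ico_disjoint_Ico_consecutive a m b),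
      Finset.Ico_union_Ico_eq_Ico ham hmb]
  rw [cylinderSet, cylinderSet, cylinderSet, hM a b (ham.trans hmb), hM a m ham, hM m b hmb,
    hM.pr_preimage m, hsplit]
  ring

lemma measure_window_inter_mul [IsFiniteMeasure μ] (hM : IsMarkovWith μ Y Q) {a m b : ℤ}
    (ham : a ≤ m) (hmb : m ≤ b) {c : S} {p : Set.Icc a m → S} {q : Set.Icc m b → S}
    (hp : p ⟨m, ham, le_rfl⟩ = c) (hq : q ⟨m, le_rfl, hmb⟩ = c) :
    μ (window Y a m ⁻¹' {p} ∩ window Y m b ⁻¹' {q}) * μ (Y m ⁻¹' {c}) =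
      μ (window Y a m ⁻¹' {p}) * μ (window Y m b ⁻¹' {q}) := by
  classical
  -- `y` glues `p` and `q` into one path; the three events are then cylinder sets of `y`.
  let y : ℤ → S := fun j =>
    if h : j ∈ Set.Icc a m then p ⟨j, h⟩ else if h : j ∈ Set.Icc m b then q ⟨j, h⟩ else c
  have hyp : ∀ j : Set.Icc a m, y j = p j := fun j => dif_pos j.2
  have hyq : ∀ j : Set.Icc m b, y j = q j := by
    rintro ⟨j, hj⟩
    by_cases hja : j ∈ Set.Icc a m
    · obtain rfl : j = m := le_antisymm hja.2 hj.1
      simp only [y, dif_pos hja, hp, hq]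
    · simp only [y, dif_neg hja, dif_pos hj]
  have hym : y m = c := (hyp ⟨m, ham, le_rfl⟩).trans hp
  rw [← cylinderSet_eq_preimage_window hyp, ← cylinderSet_eq_preimage_window hyq,
    cylinderSet_inter_cylinderSet Y ham hmb, ← hym, ← pr_mul_pr_eq_iff]
  exact hM.pr_cylinder_mul ham hmb y

theorem condIndep_window [IsFiniteMeasure μ] [MeasurableSpace S] [MeasurableSingletonClass S]
    [Countable S] (hM : IsMarkovWith μ Y Q) (hY : ∀ i, Measurable (Y i)) {a m b : ℤ}
    (ham : a ≤ m) (hmb : m ≤ b)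
    (A : Set (Set.Icc a m → S)) (B : Set (Set.Icc m b → S)) (c : S) :
    pr μ (window Y a m ⁻¹' A ∩ window Y m b ⁻¹' B ∩ Y m ⁻¹' {c}) * pr μ (Y m ⁻¹' {c}) =
      pr μ (window Y a m ⁻¹' A ∩ Y m ⁻¹' {c}) * pr μ (window Y m b ⁻¹' B ∩ Y m ⁻¹' {c}) := by
  let A' := A ∩ {p | p ⟨m, ham, le_rfl⟩ = c}
  let B' := B ∩ {q | q ⟨m, le_rfl, hmb⟩ = c}
  have hA' : window Y a m ⁻¹' A' = window Y a m ⁻¹' A ∩ Y m ⁻¹' {c} := rfl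
  have hB' : window Y m b ⁻¹' B' = window Y m b ⁻¹' B ∩ Y m ⁻¹' {c} := rfl
  have hAB : window Y a m ⁻¹' A ∩ window Y m b ⁻¹' B ∩ Y m ⁻¹' {c} =
      window Y a m ⁻¹' A' ∩ window Y m b ⁻¹' B' := by
    rw [hA', hB', Set.inter_inter_distrib_right]
  rw [hAB, ← hA', ← hB', pr_mul_pr_eq_iff]
  exact measure_preimage_inter_preimage_mul_eq (measurableSet_preimage_window_singleton hY a m)
    (measurableSet_preimage_window_singleton hY m b)
    fun p hp q hq => hM.measure_window_inter_mul ham hmb hp.2 hq.2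

end IsMarkovWith

section Entropy

open Real

variable {Ω : Type*} [MeasurableSpace Ω] {μ : Measure Ω}

lemma neg_mul_log2 (x : ℝ) : -(x * log2 x) = negMulLog x / log 2 := by
  rw [log2, negMulLog]
  ring

lemma Hent_mul_log_two {C : Type*} (Z : Ω → C) :
    Hent μ Z * log 2 = ∑' c, negMulLog (pr μ (Z ⁻¹' {c})) := by
  have : log 2 ≠ 0 := (log_pos one_lt_two).ne'
  simp only [Hent, neg_mul_log2, tsum_div_const]
  field_simp

lemma summable_negMulLog_of_HentE_ne_top [IsProbabilityMeasure μ] {C : Type*} {Z : Ω → C}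
    (h : HentE μ Z ≠ ⊤) : Summable fun c => negMulLog (pr μ (Z ⁻¹' {c})) := by
  have hnonneg : ∀ c, 0 ≤ negMulLog (pr μ (Z ⁻¹' {c})) / log 2 := fun c =>
    div_nonneg (negMulLog_nonneg measureReal_nonneg measureReal_le_one)
      (log_nonneg one_le_two)
  have := ENNReal.summable_toReal h
  simp only [neg_mul_log2, ENNReal.toReal_ofReal (hnonneg _)] at this
  exact (summable_div_const_iff (log_pos one_lt_two).ne').mp this

lemma HentE_ne_top_of_finite {C : Type*} {Z : Ω → C}
    (h : {c | 0 < pr μ (Z ⁻¹' {c})}.Finite) : HentE μ Z ≠ ⊤ := by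
  rw [HentE, tsum_eq_sum (s := h.toFinset)]
  · exact ENNReal.sum_ne_top.2 fun _ _ => ENNReal.ofReal_ne_top
  · intro c hc
    have hzero : pr μ (Z ⁻¹' {c}) = 0 :=
      le_antisymm (by simpa using hc) measureReal_nonneg
    simp [hzero]

lemma hasSum_pr_inter_preimage [IsFiniteMeasure μ] {ι : Type*} [Countable ι] (E : Set Ω)
    {g : Ω → ι} (hg : ∀ i, MeasurableSet (g ⁻¹' {i})) :
    HasSum (fun i => pr μ (E ∩ g ⁻¹' {i})) (pr μ E) := by
  have h := measure_preimage_inter_eq_tsum (μ := μ) hg Set.univ E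
  rw [Set.preimage_univ, Set.univ_inter, tsum_univ (fun i => μ (g ⁻¹' {i} ∩ E))] at h
  have hfin : ∑' i, μ (g ⁻¹' {i} ∩ E) ≠ ⊤ := h ▸ measure_ne_top μ E
  simp only [Set.inter_comm E]
  rw [pr, h, ENNReal.tsum_toReal_eq fun _ => measure_ne_top μ _]
  exact (ENNReal.summable_toReal hfin).hasSum

lemma sum_pr_inter_preimage [IsFiniteMeasure μ] {ι : Type*} [Fintype ι] (E : Set Ω)
    {g : Ω → ι} (hg : ∀ i, MeasurableSet (g ⁻¹' {i})) :
    ∑ i, pr μ (E ∩ g ⁻¹' {i}) = pr μ E :=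
  (hasSum_fintype _).unique (hasSum_pr_inter_preimage E hg)

lemma MI_mul_log_two [IsFiniteMeasure μ] {A B : Type*} [Fintype A] [Fintype B]
    {U : Ω → A} {V : Ω → B}
    (hU : ∀ a, MeasurableSet (U ⁻¹' {a})) (hV : ∀ b, MeasurableSet (V ⁻¹' {b})) :
    MI μ U V * log 2 = ∑ a, ∑ b, pr μ (U ⁻¹' {a} ∩ V ⁻¹' {b}) *
      (log (pr μ (U ⁻¹' {a} ∩ V ⁻¹' {b})) - log (pr μ (U ⁻¹' {a})) - log (pr μ (V ⁻¹' {b}))) := by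
  have hU' : ∀ a, negMulLog (pr μ (U ⁻¹' {a})) =
      ∑ b, -(pr μ (U ⁻¹' {a} ∩ V ⁻¹' {b}) * log (pr μ (U ⁻¹' {a}))) := fun a => by
    rw [Finset.sum_neg_distrib, ← Finset.sum_mul, sum_pr_inter_preimage _ hV, negMulLog, neg_mul]
  have hV' : ∀ b, negMulLog (pr μ (V ⁻¹' {b})) =
      ∑ a, -(pr μ (U ⁻¹' {a} ∩ V ⁻¹' {b}) * log (pr μ (V ⁻¹' {b}))) := fun b => by
    simp only [Set.inter_comm _ (V ⁻¹' {b})]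
    rw [Finset.sum_neg_distrib, ← Finset.sum_mul, sum_pr_inter_preimage _ hU, negMulLog, neg_mul]
  rw [MI, sub_mul, add_mul, Hent_mul_log_two, Hent_mul_log_two, Hent_mul_log_two, tsum_fintype,
    tsum_fintype, tsum_fintype, Fintype.sum_prod_type]
  simp only [← Set.singleton_prod_singleton, Set.mk_preimage_prod, hU', hV']
  rw [Finset.sum_comm (γ := B), ← Finset.sum_add_distrib, ← Finset.sum_sub_distrib]
  refine Finset.sum_congr rfl fun a _ => ?_
  rw [← Finset.sum_add_distrib, ← Finset.sum_sub_distrib]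
  refine Finset.sum_congr rfl fun b _ => ?_
  rw [negMulLog]
  ring

end Entropy

section MutualInformation

open Real

/- With `u = P(E ∩ F ∩ {Z = c})` this is one summand of `I(E;F) ≤ I(E;(F,Z)) = I(E;Z) ≤ H(Z)`:
conditional independence turns `u / (P(E) P(F ∩ {Z = c}))` into
`P(E ∩ {Z = c}) / (P(E) P(Z = c)) ≤ 1 / P(Z = c)`, and `1 - 1/x ≤ log x` does the rest. -/
lemma sub_mul_div_le_mul_neg_log {u pc pE pF pEF pEc pFc : ℝ} (hu : 0 ≤ u) (huEF : u ≤ pEF)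
    (huEc : u ≤ pEc) (hEc : pEc ≤ pE) (huFc : u ≤ pFc) (hFc : pFc ≤ pF)
    (hci : u * pc = pEc * pFc) :
    u - pFc * (pEF / pF) ≤ u * -log pc - u * (log pEF - log pE - log pF) := by
  rcases hu.eq_or_lt with rfl | hu
  · have : 0 ≤ pFc * (pEF / pF) := by
      have := huFc.trans hFc
      positivity
    simpa using this
  have hEc0 : 0 < pEc := hu.trans_le huEc
  have hFc0 : 0 < pFc := hu.trans_le huFc
  have hEF0 : 0 < pEF := hu.trans_le huEF
  have hF0 : 0 < pF := hFc0.trans_le hFc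
  have hc0 : 0 < pc := pos_of_mul_pos_right (hci ▸ mul_pos hEc0 hFc0) hu.le
  have hlogc : log pc = log pEc + log pFc - log u := by
    rw [eq_sub_iff_add_eq, ← log_mul hc0.ne' hu.ne', ← log_mul hEc0.ne' hFc0.ne', mul_comm, hci]
  set x := u * pF / (pFc * pEF) with hx
  have hlogx : log x = log u + log pF - log pFc - log pEF := by
    rw [hx, log_div (by positivity) (by positivity), log_mul hu.ne' hF0.ne',
      log_mul hFc0.ne' hEF0.ne']
    ring
  calc u - pFc * (pEF / pF) = u * (1 - x⁻¹) := by rw [hx]; field_simp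
    _ ≤ u * log x := mul_le_mul_of_nonneg_left (one_sub_inv_le_log_of_pos (by positivity)) hu.le
    _ ≤ u * -log pc - u * (log pEF - log pE - log pF) := by
      rw [hlogx, hlogc, ← mul_sub]
      have := log_le_log hEc0 hEc
      exact mul_le_mul_of_nonneg_left (by linarith) hu.le

variable {Ω : Type*} [MeasurableSpace Ω] {μ : Measure Ω} [IsProbabilityMeasure μ]
  {C : Type*} {Z : Ω → C}

lemma summable_pr_inter_mul_neg_log (E : Set Ω)
    (hH : Summable fun c => negMulLog (pr μ (Z ⁻¹' {c}))) :
    Summable fun c => pr μ (E ∩ Z ⁻¹' {c}) * -log (pr μ (Z ⁻¹' {c})) := by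
  have hsurprisal : ∀ c, 0 ≤ -log (pr μ (Z ⁻¹' {c})) := fun c =>
    neg_nonneg.2 (log_nonpos measureReal_nonneg measureReal_le_one)
  refine hH.of_nonneg_of_le (fun c => mul_nonneg measureReal_nonneg (hsurprisal c)) fun c => ?_
  rw [negMulLog, neg_mul, ← mul_neg]
  exact mul_le_mul_of_nonneg_right (measureReal_mono Set.inter_subset_right) (hsurprisal c)

lemma pr_inter_mul_log_le_tsum [Countable C] {E F : Set Ω}
    (hZ : ∀ c, MeasurableSet (Z ⁻¹' {c}))
    (hci : ∀ c, pr μ (E ∩ F ∩ Z ⁻¹' {c}) * pr μ (Z ⁻¹' {c}) =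
      pr μ (E ∩ Z ⁻¹' {c}) * pr μ (F ∩ Z ⁻¹' {c}))
    (hH : Summable fun c => negMulLog (pr μ (Z ⁻¹' {c}))) :
    pr μ (E ∩ F) * (log (pr μ (E ∩ F)) - log (pr μ E) - log (pr μ F)) ≤
      ∑' c, pr μ (E ∩ F ∩ Z ⁻¹' {c}) * -log (pr μ (Z ⁻¹' {c})) := by
  set L := log (pr μ (E ∩ F)) - log (pr μ E) - log (pr μ F)
  have hEF := hasSum_pr_inter_preimage (μ := μ) (E ∩ F) hZ
  have hFZ := hasSum_pr_inter_preimage (μ := μ) F hZ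
  have hlow := hEF.sub (hFZ.mul_right (pr μ (E ∩ F) / pr μ F))
  have hup := (summable_pr_inter_mul_neg_log (E ∩ F) hH).hasSum.sub (hEF.mul_right L)
  have hle := hasSum_le (fun c => sub_mul_div_le_mul_neg_log measureReal_nonneg
    (measureReal_mono Set.inter_subset_left)
    (measureReal_mono (Set.inter_subset_inter_left _ Set.inter_subset_left))
    (measureReal_mono Set.inter_subset_left)
    (measureReal_mono (Set.inter_subset_inter_left _ Set.inter_subset_right))
    (measureReal_mono Set.inter_subset_left) (hci c)) hlow hup
  have hcancel : pr μ F * (pr μ (E ∩ F) / pr μ F) = pr μ (E ∩ F) := by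
    rcases eq_or_ne (pr μ F) 0 with h | h
    · have : pr μ (E ∩ F) = 0 :=
        le_antisymm (h ▸ measureReal_mono Set.inter_subset_right) measureReal_nonneg
      simp [h, this]
    · field_simp
  linarith

theorem MI_le_Hent_of_condIndep [Countable C] {A B : Type*} [Fintype A] [Fintype B]
    {U : Ω → A} {V : Ω → B} (hU : ∀ a, MeasurableSet (U ⁻¹' {a}))
    (hV : ∀ b, MeasurableSet (V ⁻¹' {b})) (hZ : ∀ c, MeasurableSet (Z ⁻¹' {c}))
    (hci : ∀ a b c, pr μ (U ⁻¹' {a} ∩ V ⁻¹' {b} ∩ Z ⁻¹' {c}) * pr μ (Z ⁻¹' {c}) =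
      pr μ (U ⁻¹' {a} ∩ Z ⁻¹' {c}) * pr μ (V ⁻¹' {b} ∩ Z ⁻¹' {c}))
    (hH : Summable fun c => negMulLog (pr μ (Z ⁻¹' {c}))) :
    MI μ U V ≤ Hent μ Z := by
  have hsum : ∀ a b, Summable fun c =>
      pr μ (U ⁻¹' {a} ∩ V ⁻¹' {b} ∩ Z ⁻¹' {c}) * -log (pr μ (Z ⁻¹' {c})) :=
    fun a b => summable_pr_inter_mul_neg_log _ hH
  have hmarg : ∀ c, ∑ a, ∑ b, pr μ (U ⁻¹' {a} ∩ V ⁻¹' {b} ∩ Z ⁻¹' {c}) = pr μ (Z ⁻¹' {c}) := by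
    intro c
    calc _ = ∑ a, pr μ (U ⁻¹' {a} ∩ Z ⁻¹' {c}) := Finset.sum_congr rfl fun a _ => by
          rw [← sum_pr_inter_preimage _ hV]
          exact Finset.sum_congr rfl fun b _ => by rw [Set.inter_right_comm]
      _ = pr μ (Z ⁻¹' {c}) := by
          rw [← sum_pr_inter_preimage _ hU]
          exact Finset.sum_congr rfl fun a _ => by rw [Set.inter_comm]
  refine le_of_mul_le_mul_right ?_ (log_pos one_lt_two)
  rw [MI_mul_log_two hU hV, Hent_mul_log_two]
  calc _ ≤ ∑ a, ∑ b, ∑' c, pr μ (U ⁻¹' {a} ∩ V ⁻¹' {b} ∩ Z ⁻¹' {c}) * -log (pr μ (Z ⁻¹' {c})) :=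
        Finset.sum_le_sum fun a _ => Finset.sum_le_sum fun b _ =>
          pr_inter_mul_log_le_tsum hZ (hci a b) hH
    _ = ∑' c, ∑ a, ∑ b, pr μ (U ⁻¹' {a} ∩ V ⁻¹' {b} ∩ Z ⁻¹' {c}) * -log (pr μ (Z ⁻¹' {c})) := by
        rw [Summable.tsum_finsetSum fun a _ => summable_sum fun b _ => hsum a b]
        exact Finset.sum_congr rfl fun a _ => (Summable.tsum_finsetSum fun b _ => hsum a b).symm
    _ = ∑' c, negMulLog (pr μ (Z ⁻¹' {c})) := by
        refine tsum_congr fun c => ?_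
        simp only [← Finset.sum_mul, hmarg c]
        rw [negMulLog, neg_mul, mul_neg]

end MutualInformation

section Blocks

variable {Ω S 𝕏 : Type*} {Y : ℤ → Ω → S} {f : S → 𝕏} {X : ℤ → Ω → 𝕏}

lemma exists_pastBlock_eq_comp_window (hX : ∀ i ω, X i ω = f (Y i ω)) (n : ℕ) :
    ∃ g : (Set.Icc (-(n : ℤ) + 1) 0 → S) → Fin n → 𝕏,
      pastBlock X n = g ∘ window Y (-(n : ℤ) + 1) 0 :=
  ⟨fun p i => f (p ⟨-(n : ℤ) + 1 + i, by have := i.isLt; constructor <;> omega⟩), by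
    ext ω i
    simp [pastBlock, window, hX]⟩

lemma exists_futureBlock_eq_comp_window (hX : ∀ i ω, X i ω = f (Y i ω)) (n : ℕ) :
    ∃ g : (Set.Icc 0 (n : ℤ) → S) → Fin n → 𝕏, futureBlock X n = g ∘ window Y 0 n :=
  ⟨fun p i => f (p ⟨1 + i, by have := i.isLt; constructor <;> omega⟩), by
    ext ω i
    simp [futureBlock, window, hX]⟩

variable [MeasurableSpace Ω] {μ : Measure Ω} {Q : S → S → ℝ}
  [MeasurableSpace S] [MeasurableSingletonClass S] [Countable S]

lemma measurableSet_preimage_pastBlock (hY : ∀ i, Measurable (Y i))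
    (hX : ∀ i ω, X i ω = f (Y i ω)) (n : ℕ) (a : Fin n → 𝕏) :
    MeasurableSet (pastBlock X n ⁻¹' {a}) := by
  obtain ⟨g, hg⟩ := exists_pastBlock_eq_comp_window hX n
  rw [hg, Set.preimage_comp]
  exact measurableSet_preimage_window hY _ _ _

lemma measurableSet_preimage_futureBlock (hY : ∀ i, Measurable (Y i))
    (hX : ∀ i ω, X i ω = f (Y i ω)) (n : ℕ) (b : Fin n → 𝕏) :
    MeasurableSet (futureBlock X n ⁻¹' {b}) := by
  obtain ⟨g, hg⟩ := exists_futureBlock_eq_comp_window hX n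
  rw [hg, Set.preimage_comp]
  exact measurableSet_preimage_window hY _ _ _

lemma IsMarkovWith.condIndep_blocks [IsFiniteMeasure μ] (hM : IsMarkovWith μ Y Q)
    (hY : ∀ i, Measurable (Y i)) (hX : ∀ i ω, X i ω = f (Y i ω)) {n : ℕ} (hn : 1 ≤ n)
    (a b : Fin n → 𝕏) (c : S) :
    pr μ (pastBlock X n ⁻¹' {a} ∩ futureBlock X n ⁻¹' {b} ∩ Y 0 ⁻¹' {c}) * pr μ (Y 0 ⁻¹' {c}) =
      pr μ (pastBlock X n ⁻¹' {a} ∩ Y 0 ⁻¹' {c}) *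
        pr μ (futureBlock X n ⁻¹' {b} ∩ Y 0 ⁻¹' {c}) := by
  obtain ⟨g, hg⟩ := exists_pastBlock_eq_comp_window hX n
  obtain ⟨h, hh⟩ := exists_futureBlock_eq_comp_window hX n
  rw [hg, hh, Set.preimage_comp, Set.preimage_comp]
  exact hM.condIndep_window hY (by omega) (by omega) _ _ c

lemma IsMarkovWith.MI_blocks_le_Hent [IsProbabilityMeasure μ] [Fintype 𝕏]
    (hM : IsMarkovWith μ Y Q) (hY : ∀ i, Measurable (Y i)) (hX : ∀ i ω, X i ω = f (Y i ω))
    (hH : HentE μ (Y 0) ≠ ⊤) {n : ℕ} (hn : 1 ≤ n) :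
    MI μ (pastBlock X n) (futureBlock X n) ≤ Hent μ (Y 0) :=
  MI_le_Hent_of_condIndep (measurableSet_preimage_pastBlock hY hX n)
    (measurableSet_preimage_futureBlock hY hX n) (fun c => hY 0 (measurableSet_singleton c))
    (hM.condIndep_blocks hY hX hn) (summable_negMulLog_of_HentE_ne_top hH)

end Blocks

/-- If the observable process `X_i = f(Y_i)` of a stationary countable-state Markov chain
has unbounded block mutual information `E(n) = I(X_{-n+1}^0; X_1^n) → ∞`, then
`H(Y_0) = ∞`; in particular `Y_0` takes infinitely many values with positive probability. -/
theorem entropy_infinite_of_unbounded_blockMI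
    {Ω S 𝕏 : Type*} [MeasurableSpace Ω] (μ : Measure Ω) [IsProbabilityMeasure μ]
    [MeasurableSpace S] [MeasurableSingletonClass S] [Countable S] [Fintype 𝕏]
    (Y : ℤ → Ω → S) (hY : ∀ i, Measurable (Y i))
    (hMarkov : ∃ Q : S → S → ℝ, IsMarkovWith μ Y Q)
    (f : S → 𝕏) (X : ℤ → Ω → 𝕏) (hX : ∀ i ω, X i ω = f (Y i ω))
    (hdiv : Filter.Tendsto (fun n : ℕ => MI μ (pastBlock X n) (futureBlock X n))
      Filter.atTop Filter.atTop) :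
    HentE μ (Y 0) = ⊤ ∧ {s : S | 0 < pr μ ((Y 0) ⁻¹' {s})}.Infinite := by
  obtain ⟨Q, hQ⟩ := hMarkov
  have hinfinite : HentE μ (Y 0) = ⊤ := by
    by_contra hH
    obtain ⟨n, hlarge, hn⟩ := ((hdiv.eventually_gt_atTop (Hent μ (Y 0))).and
      (Filter.eventually_ge_atTop 1)).exists
    exact (hQ.MI_blocks_le_Hent hY hX hH hn).not_gt hlarge
  exact ⟨hinfinite, fun hfinite => HentE_ne_top_of_finite hfinite hinfinite⟩
end

section
/- Let D_n = N if 2s(N) ≤ n and D_n = 0 otherwise, where N has distribution P(N = m) = C/(m (log₂ m)^α) on m ≥ 2, α ∈ (1,2], and s(m) = ⌊log₂ m⌋ + 1. Then H(D_n) = Θ(n^{2-α}) for α ∈ (1,2) and H(D_n) = Θ(log₂ n) for α = 2, as n → ∞. -/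
open MeasureTheory ProbabilityTheory

/-- `s(m) = ⌊log₂ m⌋ + 1`, the length of the binary expansion of `m`. -/
def binLen (m : ℕ) : ℕ := Nat.log 2 m + 1

/-!
Outside the event `N < 2^⌊n/2⌋` (which is `2 s(N) ≤ n`) the variable `D_n` is `0`, so up to two
atoms of bounded contribution, `H(D_n)` is `∑_{2 ≤ m < 2^⌊n/2⌋} -p_m log₂ p_m` with
`p_m = C / (m (log₂ m)^α)`. As `-log₂ p_m ≍ log₂ m`, the dyadic block `2^j ≤ m < 2^{j+1}`
contributes `≍ j^{1-α}`, so `H(D_n) ≍ ∑_{1 ≤ j < n/2} j^{1-α}` up to additive constants.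
Comparing this sum with `∫ x^{1-α} dx` gives `n^{2-α}` for `α < 2` and `log₂ n` for `α = 2`.
-/

open Filter Finset

theorem log2_eq_logb : log2 = Real.logb 2 := rfl

lemma one_le_log2 {x : ℝ} (hx : 2 ≤ x) : 1 ≤ log2 x := by
  rw [log2_eq_logb, ← Real.logb_self_eq_one one_lt_two]
  exact Real.logb_le_logb_of_le one_lt_two two_pos hx

lemma log2_le_two_mul {x : ℝ} (hx : 0 < x) : log2 x ≤ 2 * x := by
  have hlog := Real.log_le_sub_one_of_pos hx
  have h2 := Real.log_two_gt_d9
  rw [log2, div_le_iff₀ (Real.log_pos one_lt_two)]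
  rcases le_or_gt 0 (Real.log x) with h | h <;> nlinarith

noncomputable def negMulLog2 (p : ℝ) : ℝ := -(p * log2 p)

lemma negMulLog2_nonneg {p : ℝ} (h0 : 0 ≤ p) (h1 : p ≤ 1) : 0 ≤ negMulLog2 p := by
  rw [negMulLog2, log2_eq_logb, ← neg_mul, neg_mul_comm]
  exact mul_nonneg h0 (neg_nonneg.mpr (Real.logb_nonpos one_lt_two h0 h1))

lemma negMulLog2_le_two {p : ℝ} (h0 : 0 ≤ p) : negMulLog2 p ≤ 2 := by
  have hη : negMulLog2 p = Real.negMulLog p / Real.log 2 := by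
    rw [negMulLog2, log2, Real.negMulLog]; ring
  have h2 := Real.log_two_gt_d9
  rw [hη, div_le_iff₀ (Real.log_pos one_lt_two)]
  nlinarith [Real.negMulLog_le_one_sub_self h0]

lemma mul_log2_sub_one_le_negMulLog2 {p x : ℝ} (hp : 0 < p) (hx : 0 < x) (hpx : p ≤ 2 / x) :
    p * (log2 x - 1) ≤ negMulLog2 p := by
  have h : log2 p ≤ 1 - log2 x := by
    calc log2 p ≤ log2 (2 / x) := Real.logb_le_logb_of_le one_lt_two hp hpx
      _ = 1 - log2 x := by
        rw [log2_eq_logb, Real.logb_div two_ne_zero hx.ne', Real.logb_self_eq_one one_lt_two]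
  rw [negMulLog2]
  nlinarith

def AffinelyComparable (f g : ℕ → ℝ) : Prop :=
  ∃ c₁ c₂ a : ℝ, 0 < c₁ ∧ 0 < c₂ ∧ ∀ᶠ n in atTop, c₁ * g n - a ≤ f n ∧ f n ≤ c₂ * g n + a

namespace AffinelyComparable

variable {f g h : ℕ → ℝ}

lemma trans (hfg : AffinelyComparable f g) (hgh : AffinelyComparable g h) :
    AffinelyComparable f h := by
  obtain ⟨c₁, c₂, a, hc₁, hc₂, hfg⟩ := hfg
  obtain ⟨b₁, b₂, b, hb₁, hb₂, hgh⟩ := hgh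
  refine ⟨c₁ * b₁, c₂ * b₂, (c₁ + c₂) * |b| + a, by positivity, by positivity, ?_⟩
  filter_upwards [hfg, hgh] with n ⟨h₁, h₂⟩ ⟨h₃, h₄⟩
  have h₅ := mul_le_mul_of_nonneg_left h₃ hc₁.le
  have h₆ := mul_le_mul_of_nonneg_left h₄ hc₂.le
  constructor <;> nlinarith [le_abs_self b, neg_abs_le b]

lemma exists_bounds (hfg : AffinelyComparable f g) (hg : Tendsto g atTop atTop) :
    ∃ K₁ K₂ : ℝ, 0 < K₁ ∧ 0 < K₂ ∧ ∃ N₀ : ℕ, ∀ n : ℕ, N₀ ≤ n →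
      K₁ * g n ≤ f n ∧ f n ≤ K₂ * g n := by
  obtain ⟨c₁, c₂, a, hc₁, hc₂, hfg⟩ := hfg
  refine ⟨c₁ / 2, c₂ + 1, by positivity, by positivity, ?_⟩
  obtain ⟨N₀, hN₀⟩ := eventually_atTop.mp
    (hfg.and (hg.eventually_ge_atTop (max (2 * a / c₁) a)))
  refine ⟨N₀, fun n hn ↦ ?_⟩
  obtain ⟨⟨h₁, h₂⟩, hgn⟩ := hN₀ n hn
  have ha₁ : 2 * a ≤ c₁ * g n := by
    have := (div_le_iff₀' hc₁).mp ((le_max_left _ _).trans hgn)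
    linarith
  have ha₂ : a ≤ g n := (le_max_right _ _).trans hgn
  constructor <;> nlinarith

end AffinelyComparable

lemma antitoneOn_rpow_Icc_one {r : ℝ} (hr : r ≤ 0) (b : ℝ) :
    AntitoneOn (fun x : ℝ ↦ x ^ r) (Set.Icc 1 b) :=
  (Real.antitoneOn_rpow_Ioi_of_exponent_nonpos hr).mono fun _ hx ↦ lt_of_lt_of_le one_pos hx.1

lemma integral_rpow_le_sum_Ico {r : ℝ} (hr : r ≤ 0) {k : ℕ} (hk : 1 ≤ k) :
    ∫ x in (1 : ℝ)..k, x ^ r ≤ ∑ j ∈ Ico 1 k, (j : ℝ) ^ r := by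
  simpa using AntitoneOn.integral_le_sum_Ico hk (by simpa using antitoneOn_rpow_Icc_one hr k)

lemma sum_Ico_rpow_le_one_add_integral {r : ℝ} (hr : r ≤ 0) {k : ℕ} (hk : 1 ≤ k) :
    ∑ j ∈ Ico 1 k, (j : ℝ) ^ r ≤ 1 + ∫ x in (1 : ℝ)..k, x ^ r := by
  have hshift : ∑ j ∈ Ico 1 (k + 1), (j : ℝ) ^ r = 1 + ∑ i ∈ Ico 1 k, ((i + 1 : ℕ) : ℝ) ^ r := by
    rw [Finset.sum_eq_sum_Ico_succ_bot (by omega), Nat.cast_one, Real.one_rpow,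
      ← Finset.sum_Ico_add' (fun j : ℕ ↦ (j : ℝ) ^ r)]
  have hlast : 0 ≤ (k : ℝ) ^ r := by positivity
  have := AntitoneOn.sum_le_integral_Ico hk (by simpa using antitoneOn_rpow_Icc_one hr k)
  push_cast at this hshift
  rw [Finset.sum_Ico_succ_top (by omega)] at hshift
  linarith

lemma natCast_div_two_mem_Icc {n : ℕ} (hn : 2 ≤ n) :
    (n : ℝ) / 3 ≤ (n / 2 : ℕ) ∧ ((n / 2 : ℕ) : ℝ) ≤ n := by
  constructor
  · rw [div_le_iff₀ three_pos]; exact_mod_cast (by omega : n ≤ n / 2 * 3)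
  · exact_mod_cast Nat.div_le_self n 2

lemma affinelyComparable_sum_Ico_rpow {α : ℝ} (hα1 : 1 < α) (hα2 : α < 2) :
    AffinelyComparable (fun n ↦ ∑ j ∈ Ico 1 (n / 2), (j : ℝ) ^ (1 - α))
      (fun n ↦ (n : ℝ) ^ (2 - α)) := by
  have hs : 0 < 2 - α := by linarith
  refine ⟨1 / 3 / (2 - α), 1 / (2 - α), 1 / (2 - α) + 1, by positivity, by positivity, ?_⟩
  filter_upwards [eventually_ge_atTop 2] with n hn
  obtain ⟨hlo, hhi⟩ := natCast_div_two_mem_Icc hn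
  have hk : 1 ≤ n / 2 := by omega
  set k : ℝ := ((n / 2 : ℕ) : ℝ)
  have hint : ∫ x in (1 : ℝ)..k, x ^ (1 - α) = (k ^ (2 - α) - 1) / (2 - α) := by
    rw [integral_rpow (Or.inl (by linarith)), Real.one_rpow, show 1 - α + 1 = 2 - α by ring]
  have hsum_lo := integral_rpow_le_sum_Ico (r := 1 - α) (by linarith) hk
  have hsum_hi := sum_Ico_rpow_le_one_add_integral (r := 1 - α) (by linarith) hk
  rw [hint] at hsum_lo hsum_hi
  have hpow_lo : (n : ℝ) ^ (2 - α) / 3 ≤ k ^ (2 - α) := by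
    have h3 : (3 : ℝ) ^ (2 - α) ≤ 3 := by
      simpa using Real.rpow_le_rpow_of_exponent_le (by norm_num : (1 : ℝ) ≤ 3)
        (by linarith : 2 - α ≤ 1)
    calc (n : ℝ) ^ (2 - α) / 3 ≤ (n : ℝ) ^ (2 - α) / 3 ^ (2 - α) := by gcongr
      _ = ((n : ℝ) / 3) ^ (2 - α) := (Real.div_rpow (by positivity) (by norm_num) _).symm
      _ ≤ k ^ (2 - α) := Real.rpow_le_rpow (by positivity) hlo hs.le
  have hpow_hi : k ^ (2 - α) ≤ (n : ℝ) ^ (2 - α) :=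
    Real.rpow_le_rpow (by positivity) hhi hs.le
  constructor
  · calc 1 / 3 / (2 - α) * (n : ℝ) ^ (2 - α) - (1 / (2 - α) + 1)
        ≤ ((n : ℝ) ^ (2 - α) / 3 - 1) / (2 - α) := by
          rw [sub_div]; linarith [show 1 / 3 / (2 - α) * (n : ℝ) ^ (2 - α)
            = (n : ℝ) ^ (2 - α) / 3 / (2 - α) by ring]
      _ ≤ (k ^ (2 - α) - 1) / (2 - α) := by gcongr
      _ ≤ _ := hsum_lo
  · calc _ ≤ 1 + (k ^ (2 - α) - 1) / (2 - α) := hsum_hi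
      _ ≤ 1 + (n : ℝ) ^ (2 - α) / (2 - α) := by gcongr; linarith
      _ = 1 / (2 - α) * (n : ℝ) ^ (2 - α) + 1 := by ring
      _ ≤ _ := by linarith [one_div_pos.mpr hs]

lemma affinelyComparable_sum_Ico_inv :
    AffinelyComparable (fun n ↦ ∑ j ∈ Ico 1 (n / 2), (j : ℝ) ^ (-1 : ℝ)) (fun n ↦ log2 n) := by
  have hlog2 := Real.log_pos one_lt_two
  refine ⟨Real.log 2, Real.log 2, Real.log 3 + 1, hlog2, hlog2, ?_⟩
  filter_upwards [eventually_ge_atTop 2] with n hn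
  obtain ⟨hlo, hhi⟩ := natCast_div_two_mem_Icc hn
  have hk : 1 ≤ n / 2 := by omega
  set k : ℝ := ((n / 2 : ℕ) : ℝ)
  have hk0 : 0 < k := by simp only [k]; exact_mod_cast hk
  have hint : ∫ x in (1 : ℝ)..k, x ^ (-1 : ℝ) = Real.log k := by
    simp_rw [Real.rpow_neg_one]
    rw [integral_inv_of_pos one_pos hk0, div_one]
  have hsum_lo := integral_rpow_le_sum_Ico (r := -1) (by norm_num) hk
  have hsum_hi := sum_Ico_rpow_le_one_add_integral (r := -1) (by norm_num) hk
  rw [hint] at hsum_lo hsum_hi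
  have hlog : Real.log 2 * log2 n = Real.log n := by rw [log2]; field_simp
  have hlog_lo : Real.log n - Real.log 3 ≤ Real.log k := by
    rw [← Real.log_div (by positivity) (by norm_num)]
    exact Real.log_le_log (by positivity) hlo
  have hlog_hi : Real.log k ≤ Real.log n := Real.log_le_log hk0 hhi
  constructor <;> linarith

/-- The law `P(N = m) = C / (m (log₂ m)^α)`. -/
noncomputable def logPowerLaw (C α x : ℝ) : ℝ := C / (x * log2 x ^ α)

section LogPowerLaw

variable {C α : ℝ}

lemma logPowerLaw_pos {x : ℝ} (hC : 0 < C) (hx : 2 ≤ x) : 0 < logPowerLaw C α x := by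
  have := Real.rpow_pos_of_pos (by linarith [one_le_log2 hx] : 0 < log2 x) α
  unfold logPowerLaw
  positivity

lemma logPowerLaw_le_two_div {x : ℝ} (hC : 0 ≤ C) (hC2 : C ≤ 2) (hα : 0 ≤ α) (hx : 2 ≤ x) :
    logPowerLaw C α x ≤ 2 / x := by
  have hLα : 1 ≤ log2 x ^ α := Real.one_le_rpow (one_le_log2 hx) hα
  calc logPowerLaw C α x ≤ C / x :=
        div_le_div_of_nonneg_left hC (by linarith) (le_mul_of_one_le_right (by linarith) hLα)
    _ ≤ 2 / x := by gcongr

lemma negMulLog2_logPowerLaw_le {x : ℝ} (hC : 0 < C) (hα : 0 ≤ α) (hx : 2 ≤ x) :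
    negMulLog2 (logPowerLaw C α x) ≤ (1 + 2 * α + |log2 C|) * (logPowerLaw C α x * log2 x) := by
  have hL := one_le_log2 hx
  have hLα : 0 < log2 x ^ α := Real.rpow_pos_of_pos (by linarith) α
  have hp : 0 < logPowerLaw C α x := logPowerLaw_pos hC hx
  have hlog : -log2 (logPowerLaw C α x) = log2 x + α * log2 (log2 x) - log2 C := by
    simp only [logPowerLaw, log2_eq_logb] at *
    rw [Real.logb_div hC.ne' (by positivity), Real.logb_mul (by linarith) hLα.ne',
      Real.logb_rpow_eq_mul_logb_of_pos (by linarith)]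
    ring
  have hbound : log2 x + α * log2 (log2 x) - log2 C ≤ (1 + 2 * α + |log2 C|) * log2 x := by
    have h1 := log2_le_two_mul (by linarith : 0 < log2 x)
    have h2 := neg_le_abs (log2 C)
    nlinarith [abs_nonneg (log2 C)]
  rw [negMulLog2, neg_mul_eq_mul_neg, hlog]
  nlinarith

lemma card_Ico_two_pow (j : ℕ) : #(Ico (2 ^ j) (2 ^ (j + 1))) = 2 ^ j := by
  rw [Nat.card_Ico, pow_succ]; omega

lemma sum_Ico_two_pow_eq_sum_dyadic {M : Type*} [AddCommMonoid M] (f : ℕ → M) {a b : ℕ}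
    (hab : a ≤ b) :
    ∑ m ∈ Ico (2 ^ a) (2 ^ b), f m = ∑ j ∈ Ico a b, ∑ m ∈ Ico (2 ^ j) (2 ^ (j + 1)), f m := by
  induction b, hab using Nat.le_induction with
  | base => simp
  | succ b hab ih =>
    rw [← Finset.sum_Ico_consecutive f (Nat.pow_le_pow_right two_pos hab)
      (Nat.pow_le_pow_right two_pos b.le_succ), ih, Finset.sum_Ico_succ_top hab]

lemma sum_dyadic_le_of_le {f : ℕ → ℝ} {j : ℕ} {b : ℝ}
    (h : ∀ m ∈ Ico (2 ^ j) (2 ^ (j + 1)), f m ≤ b / 2 ^ j) :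
    ∑ m ∈ Ico (2 ^ j) (2 ^ (j + 1)), f m ≤ b := by
  refine (Finset.sum_le_card_nsmul _ _ _ h).trans (le_of_eq ?_)
  rw [card_Ico_two_pow, nsmul_eq_mul]
  push_cast
  field_simp

lemma le_sum_dyadic_of_le {f : ℕ → ℝ} {j : ℕ} {a : ℝ}
    (h : ∀ m ∈ Ico (2 ^ j) (2 ^ (j + 1)), a / 2 ^ j ≤ f m) :
    a ≤ ∑ m ∈ Ico (2 ^ j) (2 ^ (j + 1)), f m := by
  refine le_trans (le_of_eq ?_) (Finset.card_nsmul_le_sum _ _ _ h)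
  rw [card_Ico_two_pow, nsmul_eq_mul]
  push_cast
  field_simp

lemma log2_natCast_mem_Icc {j m : ℕ} (hm : m ∈ Ico (2 ^ j) (2 ^ (j + 1))) :
    (j : ℝ) ≤ log2 m ∧ log2 m ≤ j + 1 := by
  rw [Finset.mem_Ico] at hm
  have hpow : ∀ i : ℕ, Real.logb 2 ((2 : ℝ) ^ i) = i := fun i ↦ by
    rw [Real.logb_pow, Real.logb_self_eq_one one_lt_two, mul_one]
  have h1 : ((2 : ℝ) ^ j) ≤ m := by exact_mod_cast hm.1
  have h2 : (m : ℝ) ≤ (2 : ℝ) ^ (j + 1) := by exact_mod_cast hm.2.le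
  have h1' := Real.logb_le_logb_of_le one_lt_two (by positivity) h1
  have h2' := Real.logb_le_logb_of_le one_lt_two (lt_of_lt_of_le (by positivity) h1) h2
  rw [hpow] at h1' h2'
  push_cast at h2'
  exact ⟨h1', h2'⟩

lemma logPowerLaw_mul_log2_mem_Icc (hC : 0 ≤ C) (hα : 1 ≤ α) {j m : ℕ} (hj : 1 ≤ j)
    (hm : m ∈ Ico (2 ^ j) (2 ^ (j + 1))) :
    C / 2 ^ α * ((j : ℝ) ^ (1 - α) / 2 ^ j) ≤ logPowerLaw C α m * log2 m ∧
      logPowerLaw C α m * log2 m ≤ C * ((j : ℝ) ^ (1 - α) / 2 ^ j) := by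
  obtain ⟨hjL, hLj⟩ := log2_natCast_mem_Icc hm
  rw [Finset.mem_Ico] at hm
  have hj1 : (1 : ℝ) ≤ j := by exact_mod_cast hj
  have hm1 : ((2 : ℝ) ^ j) ≤ m := by exact_mod_cast hm.1
  have hm0 : (0 : ℝ) < m := lt_of_lt_of_le (by positivity) hm1
  have hm2 : (m : ℝ) ≤ 2 * 2 ^ j := by
    have : (m : ℝ) ≤ (2 : ℝ) ^ (j + 1) := by exact_mod_cast hm.2.le
    rwa [pow_succ'] at this
  set L := log2 m
  have hL : 0 < L := by linarith
  have hmass : logPowerLaw C α m * L = C / (m * L ^ (α - 1)) := by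
    change C / (m * L ^ α) * L = _
    rw [Real.rpow_sub_one hL.ne']
    field_simp
  have hjpow : (j : ℝ) ^ (1 - α) / 2 ^ j = 1 / (2 ^ j * (j : ℝ) ^ (α - 1)) := by
    rw [show 1 - α = -(α - 1) by ring, Real.rpow_neg (by linarith)]
    field_simp
  rw [hmass, hjpow]
  constructor
  · have h2α : (2 : ℝ) ^ α = 2 * 2 ^ (α - 1) := by
      rw [Real.rpow_sub two_pos, Real.rpow_one]; field_simp
    have hL2j : L ^ (α - 1) ≤ 2 ^ (α - 1) * (j : ℝ) ^ (α - 1) := by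
      rw [← Real.mul_rpow two_pos.le (by linarith)]
      exact Real.rpow_le_rpow hL.le (by linarith) (by linarith)
    calc C / 2 ^ α * (1 / (2 ^ j * (j : ℝ) ^ (α - 1)))
        = C / (2 * 2 ^ j * (2 ^ (α - 1) * (j : ℝ) ^ (α - 1))) := by rw [h2α]; ring
      _ ≤ C / (m * L ^ (α - 1)) := by gcongr
  · calc C / (m * L ^ (α - 1)) ≤ C / (2 ^ j * (j : ℝ) ^ (α - 1)) := by gcongr
      _ = C * (1 / (2 ^ j * (j : ℝ) ^ (α - 1))) := by ring

lemma sum_dyadic_negMulLog2_logPowerLaw_le (hC : 0 < C) (hα : 1 ≤ α) {j : ℕ} (hj : 1 ≤ j) :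
    ∑ m ∈ Ico (2 ^ j : ℕ) (2 ^ (j + 1)), negMulLog2 (logPowerLaw C α m)
      ≤ (1 + 2 * α + |log2 C|) * C * (j : ℝ) ^ (1 - α) := by
  refine sum_dyadic_le_of_le fun m hm ↦ ?_
  have hm2 : (2 : ℝ) ≤ m := by
    exact_mod_cast (Nat.le_self_pow (by omega) 2).trans (Finset.mem_Ico.mp hm).1
  have hK : 0 ≤ 1 + 2 * α + |log2 C| := by positivity
  calc _ ≤ (1 + 2 * α + |log2 C|) * (logPowerLaw C α m * log2 m) :=
        negMulLog2_logPowerLaw_le hC (by linarith) hm2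
    _ ≤ (1 + 2 * α + |log2 C|) * (C * ((j : ℝ) ^ (1 - α) / 2 ^ j)) :=
        mul_le_mul_of_nonneg_left (logPowerLaw_mul_log2_mem_Icc hC.le hα hj hm).2 hK
    _ = _ := by ring

lemma le_sum_dyadic_negMulLog2_logPowerLaw (hC : 0 < C) (hC2 : C ≤ 2) (hα : 1 ≤ α) {j : ℕ}
    (hj : 2 ≤ j) :
    C / 2 ^ (α + 1) * (j : ℝ) ^ (1 - α)
      ≤ ∑ m ∈ Ico (2 ^ j : ℕ) (2 ^ (j + 1)), negMulLog2 (logPowerLaw C α m) := by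
  refine le_sum_dyadic_of_le fun m hm ↦ ?_
  obtain ⟨hjL, -⟩ := log2_natCast_mem_Icc hm
  have hj2 : (2 : ℝ) ≤ j := by exact_mod_cast hj
  have hm2 : (2 : ℝ) ≤ m := by
    exact_mod_cast (Nat.le_self_pow (by omega) 2).trans (Finset.mem_Ico.mp hm).1
  have hp : 0 < logPowerLaw C α m := logPowerLaw_pos hC hm2
  have hη := mul_log2_sub_one_le_negMulLog2 hp (by linarith)
    (logPowerLaw_le_two_div hC.le hC2 (by linarith) hm2)
  have hmass := (logPowerLaw_mul_log2_mem_Icc hC.le hα (by omega) hm).1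
  have hhalf : logPowerLaw C α m * log2 m / 2 ≤ negMulLog2 (logPowerLaw C α m) := by
    nlinarith
  calc C / 2 ^ (α + 1) * (j : ℝ) ^ (1 - α) / 2 ^ j
      = C / 2 ^ α * ((j : ℝ) ^ (1 - α) / 2 ^ j) / 2 := by
        rw [Real.rpow_add_one two_ne_zero α]; ring
    _ ≤ negMulLog2 (logPowerLaw C α m) := by linarith

lemma sum_negMulLog2_logPowerLaw_le (hC : 0 < C) (hα : 1 ≤ α) {k : ℕ} (hk : 1 ≤ k) :
    ∑ m ∈ Ico (2 : ℕ) (2 ^ k), negMulLog2 (logPowerLaw C α m)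
      ≤ (1 + 2 * α + |log2 C|) * C * ∑ j ∈ Ico 1 k, (j : ℝ) ^ (1 - α) := by
  have hdyadic := sum_Ico_two_pow_eq_sum_dyadic (fun m : ℕ ↦ negMulLog2 (logPowerLaw C α m)) hk
  rw [pow_one] at hdyadic
  rw [hdyadic, Finset.mul_sum]
  exact Finset.sum_le_sum fun j hj ↦
    sum_dyadic_negMulLog2_logPowerLaw_le hC hα (Finset.mem_Ico.mp hj).1

lemma le_sum_negMulLog2_logPowerLaw (hC : 0 < C) (hC2 : C ≤ 2) (hα : 1 ≤ α) {k : ℕ}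
    (hk : 2 ≤ k) :
    C / 2 ^ (α + 1) * (∑ j ∈ Ico 1 k, (j : ℝ) ^ (1 - α) - 1)
      ≤ ∑ m ∈ Ico (2 : ℕ) (2 ^ k), negMulLog2 (logPowerLaw C α m) := by
  have hdyadic := sum_Ico_two_pow_eq_sum_dyadic (fun m : ℕ ↦ negMulLog2 (logPowerLaw C α m))
    (by omega : 1 ≤ k)
  rw [pow_one] at hdyadic
  rw [hdyadic, Finset.sum_eq_sum_Ico_succ_bot (by omega : 1 < k) (fun j : ℕ ↦ (j : ℝ) ^ (1 - α)),
    Finset.sum_eq_sum_Ico_succ_bot (by omega : 1 < k), Nat.cast_one, Real.one_rpow,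
    add_sub_cancel_left, Finset.mul_sum]
  have hfirst : 0 ≤ ∑ m ∈ Ico (2 ^ 1 : ℕ) (2 ^ (1 + 1)), negMulLog2 (logPowerLaw C α m) := by
    refine Finset.sum_nonneg fun m hm ↦ ?_
    have hm2 : (2 : ℝ) ≤ m := by exact_mod_cast (Finset.mem_Ico.mp hm).1
    exact negMulLog2_nonneg (logPowerLaw_pos hC hm2).le
      ((logPowerLaw_le_two_div hC.le hC2 (by linarith) hm2).trans
        ((div_le_one (by linarith)).mpr hm2))
  have hrest := Finset.sum_le_sum fun j (hj : j ∈ Ico (1 + 1) k) ↦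
    le_sum_dyadic_negMulLog2_logPowerLaw hC hC2 hα (Finset.mem_Ico.mp hj).1
  exact hrest.trans (le_add_of_nonneg_left hfirst)

end LogPowerLaw

lemma two_mul_binLen_le_iff {m n : ℕ} (hm : m ≠ 0) : 2 * binLen m ≤ n ↔ m < 2 ^ (n / 2) := by
  rw [binLen, ← Nat.log_lt_iff_lt_pow one_lt_two hm]
  omega

section Entropy

variable {Ω : Type*} [MeasurableSpace Ω] (μ : Measure Ω)

lemma negMulLog2_pr_mem_Icc [IsProbabilityMeasure μ] (A : Set Ω) :
    0 ≤ negMulLog2 (pr μ A) ∧ negMulLog2 (pr μ A) ≤ 2 :=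
  ⟨negMulLog2_nonneg measureReal_nonneg measureReal_le_one, negMulLog2_le_two measureReal_nonneg⟩

lemma hent_eq_sum {S : Type*} {X : Ω → S} {s : Finset S} (hX : ∀ ω, X ω ∈ s) :
    Hent μ X = ∑ x ∈ s, negMulLog2 (pr μ (X ⁻¹' {x})) := by
  refine tsum_eq_sum fun x hx ↦ ?_
  have hempty : X ⁻¹' {x} = ∅ := Set.eq_empty_of_forall_notMem fun ω hω ↦ hx (hω ▸ hX ω)
  simp [hempty, pr, log2]

lemma hent_truncation_mem_Icc [IsProbabilityMeasure μ] {N T : Ω → ℕ} {M : ℕ} (hM : 2 ≤ M)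
    (hT : ∀ ω, T ω = if N ω < M then N ω else 0) :
    ∑ m ∈ Ico 2 M, negMulLog2 (pr μ (N ⁻¹' {m})) ≤ Hent μ T ∧
      Hent μ T ≤ ∑ m ∈ Ico 2 M, negMulLog2 (pr μ (N ⁻¹' {m})) + 4 := by
  have hmem : ∀ ω, T ω ∈ range M := fun ω ↦ by
    rw [hT, Finset.mem_range]; split_ifs <;> omega
  have hpre : ∀ m ∈ Ico 2 M, T ⁻¹' {m} = N ⁻¹' {m} := fun m hm ↦ by
    rw [Finset.mem_Ico] at hm
    ext ω
    simp only [Set.mem_preimage, Set.mem_singleton_iff, hT]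
    split_ifs <;> omega
  have hsum : ∑ m ∈ Ico 2 M, negMulLog2 (pr μ (T ⁻¹' {m}))
      = ∑ m ∈ Ico 2 M, negMulLog2 (pr μ (N ⁻¹' {m})) :=
    Finset.sum_congr rfl fun m hm ↦ by rw [hpre m hm]
  rw [hent_eq_sum μ hmem, ← Finset.sum_range_add_sum_Ico _ hM, hsum]
  have h0 := negMulLog2_pr_mem_Icc μ (T ⁻¹' {0})
  have h1 := negMulLog2_pr_mem_Icc μ (T ⁻¹' {1})
  simp only [Finset.sum_range_succ, Finset.sum_range_zero]
  constructor <;> linarith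

lemma exists_pr_preimage_singleton_pos [IsProbabilityMeasure μ] (N : Ω → ℕ) :
    ∃ m, 0 < pr μ (N ⁻¹' {m}) := by
  by_contra! h
  have hnull : ∀ m, μ (N ⁻¹' {m}) = 0 := fun m ↦
    (measureReal_eq_zero_iff).mp (le_antisymm (h m) measureReal_nonneg)
  have huniv : μ (⋃ m, N ⁻¹' {m}) = 0 := measure_iUnion_null hnull
  rw [← Set.preimage_iUnion, Set.iUnion_of_singleton, Set.preimage_univ, measure_univ] at huniv
  exact one_ne_zero huniv

lemma logPowerLaw_constant_mem_Ioc [IsProbabilityMeasure μ] {N : Ω → ℕ} {C α : ℝ}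
    (hdist : ∀ m : ℕ, 2 ≤ m → pr μ (N ⁻¹' {m}) = logPowerLaw C α m)
    (hsupp : ∀ m : ℕ, m < 2 → pr μ (N ⁻¹' {m}) = 0) : 0 < C ∧ C ≤ 2 := by
  constructor
  · obtain ⟨m, hm⟩ := exists_pr_preimage_singleton_pos μ N
    have hm2 : 2 ≤ m := by
      by_contra! h
      exact hm.ne' (hsupp m h)
    have hx : (2 : ℝ) ≤ m := by exact_mod_cast hm2
    have hden : 0 < (m : ℝ) * log2 m ^ α :=
      mul_pos (by linarith) (Real.rpow_pos_of_pos (by linarith [one_le_log2 hx]) α)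
    rw [hdist m hm2, logPowerLaw] at hm
    exact (div_pos_iff_of_pos_right hden).mp hm
  · have h2 := hdist 2 le_rfl
    rw [logPowerLaw, Nat.cast_ofNat, show log2 2 = 1 from Real.logb_self_eq_one one_lt_two,
      Real.one_rpow, mul_one] at h2
    have hle : pr μ (N ⁻¹' {2}) ≤ 1 := measureReal_le_one
    linarith

lemma affinelyComparable_hent_truncation [IsProbabilityMeasure μ] {N : Ω → ℕ} {C α : ℝ}
    (hα : 1 < α) (hC : 0 < C) (hC2 : C ≤ 2)
    (hdist : ∀ m : ℕ, 2 ≤ m → pr μ (N ⁻¹' {m}) = logPowerLaw C α m) {D : ℕ → Ω → ℕ}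
    (hD : ∀ n ω, D n ω = if N ω < 2 ^ (n / 2) then N ω else 0) :
    AffinelyComparable (fun n ↦ Hent μ (D n))
      (fun n ↦ ∑ j ∈ Ico 1 (n / 2), (j : ℝ) ^ (1 - α)) := by
  refine ⟨C / 2 ^ (α + 1), (1 + 2 * α + |log2 C|) * C, C / 2 ^ (α + 1) + 4,
    by positivity, by positivity, ?_⟩
  filter_upwards [eventually_ge_atTop 4] with n hn
  obtain ⟨hlo, hhi⟩ := hent_truncation_mem_Icc μ (Nat.le_self_pow (by omega) 2) (hD n)
  rw [Finset.sum_congr rfl fun m hm ↦ by rw [hdist m (Finset.mem_Ico.mp hm).1]] at hlo hhi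
  have hsum_lo := le_sum_negMulLog2_logPowerLaw hC hC2 hα.le (k := n / 2) (by omega)
  have hsum_hi := sum_negMulLog2_logPowerLaw_le hC hα.le (k := n / 2) (by omega)
  have hc : 0 < C / 2 ^ (α + 1) := by positivity
  constructor <;> linarith

end Entropy
theorem entropy_Dn_theta_general
    {Ω : Type*} [MeasurableSpace Ω] (μ : Measure Ω) [IsProbabilityMeasure μ]
    (α : ℝ) (hα1 : 1 < α)
    (C : ℝ)
    (N : Ω → ℕ)
    (hdist : ∀ m : ℕ, 2 ≤ m → pr μ (N ⁻¹' {m}) = C / ((m : ℝ) * log2 m ^ α))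
    (hsupp : ∀ m : ℕ, m < 2 → pr μ (N ⁻¹' {m}) = 0)
    (D : ℕ → Ω → ℕ)
    (hD : ∀ n ω, D n ω = if 2 * binLen (N ω) ≤ n then N ω else 0) :
    (α < 2 → ∃ K₁ K₂ : ℝ, 0 < K₁ ∧ 0 < K₂ ∧ ∃ N₀ : ℕ, ∀ n : ℕ, N₀ ≤ n →
        K₁ * (n : ℝ) ^ (2 - α) ≤ Hent μ (D n) ∧
          Hent μ (D n) ≤ K₂ * (n : ℝ) ^ (2 - α)) ∧
    (α = 2 → ∃ K₁ K₂ : ℝ, 0 < K₁ ∧ 0 < K₂ ∧ ∃ N₀ : ℕ, ∀ n : ℕ, N₀ ≤ n →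
        K₁ * log2 n ≤ Hent μ (D n) ∧ Hent μ (D n) ≤ K₂ * log2 n) := by
  obtain ⟨hC0, hC2⟩ := logPowerLaw_constant_mem_Ioc μ hdist hsupp
  have hDtrunc : ∀ n ω, D n ω = if N ω < 2 ^ (n / 2) then N ω else 0 := fun n ω ↦ by
    rcases eq_or_ne (N ω) 0 with h | h
    · simp [hD, h]
    · simp only [hD, two_mul_binLen_le_iff h]
  have hH := affinelyComparable_hent_truncation μ hα1 hC0 hC2 hdist hDtrunc
  refine ⟨fun hα2 ↦ ?_, fun hα2 ↦ ?_⟩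
  · exact (hH.trans (affinelyComparable_sum_Ico_rpow hα1 hα2)).exists_bounds
      ((tendsto_rpow_atTop (by linarith)).comp tendsto_natCast_atTop_atTop)
  · subst hα2
    have hinv := affinelyComparable_sum_Ico_inv
    rw [show (-1 : ℝ) = 1 - 2 by norm_num] at hinv
    exact (hH.trans hinv).exists_bounds
      ((Real.tendsto_logb_atTop one_lt_two).comp tendsto_natCast_atTop_atTop)

/-- Let `D_n = N` if `2 s(N) ≤ n` and `D_n = 0` otherwise, where `N` has distribution
`P(N = m) = C/(m (log₂ m)^α)` on `m ≥ 2`, `α ∈ (1,2]`, and `s(m) = ⌊log₂ m⌋ + 1`. Then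
`H(D_n) = Θ(n^{2-α})` for `α ∈ (1,2)` and `H(D_n) = Θ(log₂ n)` for `α = 2`, as `n → ∞`. -/
theorem entropy_Dn_theta
    {Ω : Type*} [MeasurableSpace Ω] (μ : Measure Ω) [IsProbabilityMeasure μ]
    (α : ℝ) (hα1 : 1 < α) (hα2 : α ≤ 2)
    (C : ℝ) (hC : C⁻¹ = ∑' m : ℕ, 1 / ((m + 2 : ℝ) * log2 (m + 2) ^ α))
    (N : Ω → ℕ) (hN : Measurable N)
    (hdist : ∀ m : ℕ, 2 ≤ m → pr μ (N ⁻¹' {m}) = C / ((m : ℝ) * log2 m ^ α))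
    (hsupp : ∀ m : ℕ, m < 2 → pr μ (N ⁻¹' {m}) = 0)
    (D : ℕ → Ω → ℕ)
    (hD : ∀ n ω, D n ω = if 2 * binLen (N ω) ≤ n then N ω else 0) :
    (α < 2 → ∃ K₁ K₂ : ℝ, 0 < K₁ ∧ 0 < K₂ ∧ ∃ N₀ : ℕ, ∀ n : ℕ, N₀ ≤ n →
        K₁ * (n : ℝ) ^ (2 - α) ≤ Hent μ (D n) ∧
          Hent μ (D n) ≤ K₂ * (n : ℝ) ^ (2 - α)) ∧
    (α = 2 → ∃ K₁ K₂ : ℝ, 0 < K₁ ∧ 0 < K₂ ∧ ∃ N₀ : ℕ, ∀ n : ℕ, N₀ ≤ n →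
        K₁ * log2 n ≤ Hent μ (D n) ∧ Hent μ (D n) ≤ K₂ * log2 n) :=
  entropy_Dn_theta_general μ α hα1 C N hdist hsupp D hD
end
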